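/- Let φ₀, φ₁ be nondegenerate Orlicz functions in Δ₂, θ ∈ (0,1), φ_θ as above, and g_x as above. Then there exists a constant K > 0 such that for all x ∈ ℂ: φ_θ(|2·g_x'(θ) − g_{2x}'(θ)|) ≤ K·φ_θ(|x|). Consequently the quasi-Young function ψ(x₁, x₀) = φ_θ(x₀) + φ_θ(x₁ − g_{x₀}'(θ)) on ℂ² satisfies the Δ₂ condition: ψ(2x₁, 2x₀) ≤ M·ψ(x₁, x₀) for some M and all (x₁, x₀). -/

import Mathlib

open Complex

noncomputable def csgn (x : ℂ) : ℂ := if x = 0 then 0 else x / ‖x‖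

/-!
Write `a = φ₀⁻¹(φ_θ |x|)` and `b = φ₁⁻¹(φ_θ |x|)`, so that `a^(1-θ) b^θ = |x|` and
`g_x'(θ) = x log (b / a)`. Replacing `x` by `2x` can only increase `a` and `b`, and multiplies
`a^(1-θ) b^θ` by `2`; so the logarithmic increments `α, β ≥ 0` of `a` and `b` satisfy
`(1-θ) α + θ β = log 2`, and `2 g_x'(θ) - g_{2x}'(θ) = 2x (α - β)` has modulus at most
`2 log 2 / (θ (1-θ)) |x|`. The Δ₂ condition passes from `φ₀, φ₁` to `φ_θ` through the inverses
(`φ (2t) ≤ M φ t` iff `2 φ⁻¹ u ≤ φ⁻¹ (M u)`), which turns this into the first estimate. The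
Δ₂ condition for `ψ` follows from the triangle inequality and `φ_θ (p + q) ≤ C (φ_θ p + φ_θ q)`.
-/

open Set Real

theorem ConvexOn.monotoneOn_Ici_of_isMinOn {f : ℝ → ℝ} {a : ℝ} (hf : ConvexOn ℝ (Ici a) f)
    (hmin : IsMinOn f (Ici a) a) : MonotoneOn f (Ici a) := by
  intro s hs t ht hst
  rcases (mem_Ici.mp hs).eq_or_lt with rfl | has
  · exact hmin ht
  · exact hf.le_right_of_left_le'' self_mem_Ici ht has hst (hmin hs)

structure IsMonoInvOn (φ ψ : ℝ → ℝ) : Prop where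
  mapsTo : MapsTo φ (Ici 0) (Ici 0)
  mapsTo_inv : MapsTo ψ (Ici 0) (Ici 0)
  invOn : InvOn ψ φ (Ici 0) (Ici 0)
  monotoneOn : MonotoneOn φ (Ici 0)

namespace IsMonoInvOn

variable {φ ψ : ℝ → ℝ}

theorem of_convexOn (hconv : ConvexOn ℝ (Ici 0) φ) (hzero : φ 0 = 0)
    (hφ : MapsTo φ (Ici 0) (Ici 0)) (hψ : MapsTo ψ (Ici 0) (Ici 0))
    (hinv : InvOn ψ φ (Ici 0) (Ici 0)) : IsMonoInvOn φ ψ :=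
  ⟨hφ, hψ, hinv,
    hconv.monotoneOn_Ici_of_isMinOn (isMinOn_iff.2 fun _ ht => hzero.le.trans (hφ ht))⟩

theorem monotoneOn_inv (h : IsMonoInvOn φ ψ) : MonotoneOn ψ (Ici 0) := by
  intro u hu v hv huv
  by_contra! hlt
  have hvu : v ≤ u := by
    simpa only [h.invOn.2 hu, h.invOn.2 hv] using
      h.monotoneOn (h.mapsTo_inv hv) (h.mapsTo_inv hu) hlt.le
  exact hlt.ne (by rw [le_antisymm huv hvu])

theorem symm (h : IsMonoInvOn φ ψ) : IsMonoInvOn ψ φ :=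
  ⟨h.mapsTo_inv, h.mapsTo, h.invOn.symm, h.monotoneOn_inv⟩

theorem le_inv_iff (h : IsMonoInvOn φ ψ) {t s : ℝ} (ht : 0 ≤ t) (hs : 0 ≤ s) :
    t ≤ ψ s ↔ φ t ≤ s := by
  constructor
  · intro hts
    simpa only [h.invOn.2 hs] using h.monotoneOn ht (h.mapsTo_inv hs) hts
  · intro hts
    simpa only [h.invOn.1 ht] using h.monotoneOn_inv (h.mapsTo ht) hs hts

theorem map_two_mul_le_iff (h : IsMonoInvOn φ ψ) {M : ℝ} (hM : 0 ≤ M) :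
    (∀ t, 0 ≤ t → φ (2 * t) ≤ M * φ t) ↔ ∀ u, 0 ≤ u → 2 * ψ u ≤ ψ (M * u) := by
  constructor
  · intro hΔ u hu
    have hψu : 0 ≤ ψ u := h.mapsTo_inv hu
    rw [h.le_inv_iff (by positivity) (by positivity)]
    simpa only [h.invOn.2 hu] using hΔ _ hψu
  · intro hΔ t ht
    have hφt : 0 ≤ φ t := h.mapsTo ht
    rw [← h.le_inv_iff (by positivity) (by positivity)]
    simpa only [h.invOn.1 ht] using hΔ _ hφt

end IsMonoInvOn

def Delta2 (φ : ℝ → ℝ) : Prop := ∃ M > 0, ∀ t, 0 ≤ t → φ (2 * t) ≤ M * φ t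

namespace Delta2

variable {φ : ℝ → ℝ}

theorem exists_map_le_mul_map (hΔ : Delta2 φ) (hmono : MonotoneOn φ (Ici 0)) (c : ℝ) :
    ∃ K > 0, ∀ s t, 0 ≤ s → 0 ≤ t → s ≤ c * t → φ s ≤ K * φ t := by
  obtain ⟨C, hC, hφC⟩ := hΔ
  have hpow : ∀ n : ℕ, ∀ t, 0 ≤ t → φ (2 ^ n * t) ≤ C ^ n * φ t := by
    intro n
    induction n with
    | zero => simp
    | succ n ih =>
      intro t ht
      calc φ (2 ^ (n + 1) * t) = φ (2 * (2 ^ n * t)) := by ring_nf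
        _ ≤ C * φ (2 ^ n * t) := hφC _ (by positivity)
        _ ≤ C * (C ^ n * φ t) := by gcongr; exact ih t ht
        _ = C ^ (n + 1) * φ t := by ring
  obtain ⟨N, hN⟩ := pow_unbounded_of_one_lt c one_lt_two
  refine ⟨C ^ N, by positivity, fun s t hs ht hst => ?_⟩
  calc φ s ≤ φ (2 ^ N * t) := hmono hs (mem_Ici.2 (by positivity)) (hst.trans (by gcongr))
    _ ≤ C ^ N * φ t := hpow N t ht

end Delta2

theorem map_add_le_of_map_two_mul_le {φ : ℝ → ℝ} {C : ℝ} (hC : 0 ≤ C)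
    (hmono : MonotoneOn φ (Ici 0)) (hnonneg : MapsTo φ (Ici 0) (Ici 0))
    (hφC : ∀ t, 0 ≤ t → φ (2 * t) ≤ C * φ t) {p q : ℝ} (hp : 0 ≤ p) (hq : 0 ≤ q) :
    φ (p + q) ≤ C * (φ p + φ q) := by
  have hφp : 0 ≤ φ p := hnonneg hp
  have hφq : 0 ≤ φ q := hnonneg hq
  rcases le_total p q with hpq | hqp
  · calc φ (p + q) ≤ φ (2 * q) := hmono (add_nonneg hp hq) (mul_nonneg zero_le_two hq) (by linarith)
      _ ≤ C * φ q := hφC q hq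
      _ ≤ C * (φ p + φ q) := by gcongr; linarith
  · calc φ (p + q) ≤ φ (2 * p) := hmono (add_nonneg hp hq) (mul_nonneg zero_le_two hp) (by linarith)
      _ ≤ C * φ p := hφC p hp
      _ ≤ C * (φ p + φ q) := by gcongr; linarith

/-- `geomInterp φ₀⁻¹ φ₁⁻¹ θ` is the inverse `φ_θ⁻¹` of the Calderón–Lozanovskii interpolant. -/
noncomputable def geomInterp (ψ₀ ψ₁ : ℝ → ℝ) (θ : ℝ) : ℝ → ℝ := fun u => ψ₀ u ^ (1 - θ) * ψ₁ u ^ θ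

theorem two_mul_rpow_mul_rpow {a b : ℝ} (ha : 0 ≤ a) (hb : 0 ≤ b) (θ : ℝ) :
    (2 * a) ^ (1 - θ) * (2 * b) ^ θ = 2 * (a ^ (1 - θ) * b ^ θ) := by
  have h2 : (2 : ℝ) ^ (1 - θ) * 2 ^ θ = 2 := by
    rw [← rpow_add two_pos, sub_add_cancel, rpow_one]
  rw [mul_rpow zero_le_two ha, mul_rpow zero_le_two hb]
  linear_combination (a ^ (1 - θ) * b ^ θ) * h2

section Interpolation

variable {φ₀ φ₁ ψ₀ ψ₁ φ : ℝ → ℝ} {θ : ℝ}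

theorem monotoneOn_geomInterp (h₀ : IsMonoInvOn φ₀ ψ₀) (h₁ : IsMonoInvOn φ₁ ψ₁)
    (hθ : θ ∈ Icc 0 1) : MonotoneOn (geomInterp ψ₀ ψ₁ θ) (Ici 0) := by
  intro u hu v hv huv
  have hθ' : 0 ≤ 1 - θ := sub_nonneg.2 hθ.2
  exact mul_le_mul
    (rpow_le_rpow (h₀.mapsTo_inv hu) (h₀.monotoneOn_inv hu hv huv) hθ')
    (rpow_le_rpow (h₁.mapsTo_inv hu) (h₁.monotoneOn_inv hu hv huv) hθ.1)
    (rpow_nonneg (h₁.mapsTo_inv hu) _) (rpow_nonneg (h₀.mapsTo_inv hv) _)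

theorem IsMonoInvOn.of_inv_geomInterp (h₀ : IsMonoInvOn φ₀ ψ₀) (h₁ : IsMonoInvOn φ₁ ψ₁)
    (hθ : θ ∈ Icc 0 1) (hφ : MapsTo φ (Ici 0) (Ici 0))
    (hinv : InvOn φ (geomInterp ψ₀ ψ₁ θ) (Ici 0) (Ici 0)) :
    IsMonoInvOn φ (geomInterp ψ₀ ψ₁ θ) :=
  IsMonoInvOn.symm
    { mapsTo := fun _ hu => mul_nonneg (rpow_nonneg (h₀.mapsTo_inv hu) _)
        (rpow_nonneg (h₁.mapsTo_inv hu) _)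
      mapsTo_inv := hφ
      invOn := hinv
      monotoneOn := monotoneOn_geomInterp h₀ h₁ hθ }

theorem Delta2.of_inv_geomInterp (h₀ : IsMonoInvOn φ₀ ψ₀) (h₁ : IsMonoInvOn φ₁ ψ₁)
    (hΔ₀ : Delta2 φ₀) (hΔ₁ : Delta2 φ₁) (hθ : θ ∈ Icc 0 1)
    (h : IsMonoInvOn φ (geomInterp ψ₀ ψ₁ θ)) : Delta2 φ := by
  obtain ⟨M₀, hM₀, hφM₀⟩ := hΔ₀
  obtain ⟨M₁, hM₁, hφM₁⟩ := hΔ₁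
  set C := max M₀ M₁
  have hC : 0 < C := lt_max_of_lt_left hM₀
  have hinv₀ : ∀ u, 0 ≤ u → 2 * ψ₀ u ≤ ψ₀ (C * u) := by
    refine (h₀.map_two_mul_le_iff hC.le).1 fun t ht => (hφM₀ t ht).trans ?_
    exact mul_le_mul_of_nonneg_right (le_max_left _ _) (h₀.mapsTo ht)
  have hinv₁ : ∀ u, 0 ≤ u → 2 * ψ₁ u ≤ ψ₁ (C * u) := by
    refine (h₁.map_two_mul_le_iff hC.le).1 fun t ht => (hφM₁ t ht).trans ?_
    exact mul_le_mul_of_nonneg_right (le_max_right _ _) (h₁.mapsTo ht)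
  refine ⟨C, hC, (h.map_two_mul_le_iff hC.le).2 fun u hu => ?_⟩
  have ha : 0 ≤ ψ₀ u := h₀.mapsTo_inv hu
  have hb : 0 ≤ ψ₁ u := h₁.mapsTo_inv hu
  calc 2 * geomInterp ψ₀ ψ₁ θ u = (2 * ψ₀ u) ^ (1 - θ) * (2 * ψ₁ u) ^ θ :=
        (two_mul_rpow_mul_rpow ha hb θ).symm
    _ ≤ ψ₀ (C * u) ^ (1 - θ) * ψ₁ (C * u) ^ θ :=
        mul_le_mul (rpow_le_rpow (by positivity) (hinv₀ u hu) (sub_nonneg.2 hθ.2))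
          (rpow_le_rpow (by positivity) (hinv₁ u hu) hθ.1) (by positivity)
          (rpow_nonneg (h₀.mapsTo_inv (mem_Ici.2 (by positivity))) _)

end Interpolation

theorem pos_of_rpow_mul_rpow_pos {a b θ : ℝ} (ha : 0 ≤ a) (hb : 0 ≤ b) (hθ : θ ∈ Ioo 0 1)
    (h : 0 < a ^ (1 - θ) * b ^ θ) : 0 < a ∧ 0 < b := by
  refine ⟨ha.lt_of_ne ?_, hb.lt_of_ne ?_⟩ <;> rintro rfl
  · rw [zero_rpow (sub_ne_zero.2 hθ.2.ne'), zero_mul] at h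
    exact h.false
  · rw [zero_rpow hθ.1.ne', mul_zero] at h
    exact h.false

theorem deriv_cpow_one_sub_mul_cpow_mul_csgn {a b θ : ℝ} (ha : 0 ≤ a) (hb : 0 ≤ b)
    (hθ : θ ∈ Ioo 0 1) {x : ℂ} (hab : a ^ (1 - θ) * b ^ θ = ‖x‖) :
    deriv (fun z : ℂ => (a : ℂ) ^ ((1 : ℂ) - z) * (b : ℂ) ^ z * csgn x) θ =
      x * ((Real.log b - Real.log a : ℝ) : ℂ) := by
  rcases eq_or_ne x 0 with rfl | hx
  · simp [csgn]
  obtain ⟨ha, hb⟩ := pos_of_rpow_mul_rpow_pos ha hb hθ (hab ▸ norm_pos_iff.2 hx)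
  have ha' : (a : ℂ) ≠ 0 := ofReal_ne_zero.2 ha.ne'
  have hb' : (b : ℂ) ≠ 0 := ofReal_ne_zero.2 hb.ne'
  have hderiv : HasDerivAt (fun z : ℂ => (a : ℂ) ^ ((1 : ℂ) - z) * (b : ℂ) ^ z * csgn x)
      (((a : ℂ) ^ ((1 : ℂ) - θ) * Complex.log a * (-1) * (b : ℂ) ^ (θ : ℂ) +
        (a : ℂ) ^ ((1 : ℂ) - θ) * ((b : ℂ) ^ (θ : ℂ) * Complex.log b * 1)) * csgn x) θ :=
    ((((hasDerivAt_id (θ : ℂ)).const_sub 1).const_cpow (Or.inl ha')).mul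
      ((hasDerivAt_id (θ : ℂ)).const_cpow (Or.inl hb'))).mul_const (csgn x)
  have hnorm : (a : ℂ) ^ ((1 : ℂ) - θ) * (b : ℂ) ^ (θ : ℂ) = ‖x‖ := by
    rw [← ofReal_one, ← ofReal_sub, ← ofReal_cpow ha.le, ← ofReal_cpow hb.le, ← ofReal_mul, hab]
  have hnx : (‖x‖ : ℂ) ≠ 0 := ofReal_ne_zero.2 (norm_ne_zero_iff.2 hx)
  rw [hderiv.deriv, csgn, if_neg hx, ofReal_sub, ← ofReal_log ha.le, ← ofReal_log hb.le]
  linear_combination (x * (‖x‖ : ℂ)⁻¹ * (Real.log b - Real.log a)) * hnorm +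
    (x * (Real.log b - Real.log a)) * mul_inv_cancel₀ hnx

theorem abs_log_sub_log_sub_le {a b a' b' θ : ℝ} (hθ : θ ∈ Ioo 0 1) (ha : 0 < a) (haa' : a ≤ a')
    (hb : 0 < b) (hbb' : b ≤ b') (h : a' ^ (1 - θ) * b' ^ θ = 2 * (a ^ (1 - θ) * b ^ θ)) :
    |(Real.log b - Real.log a) - (Real.log b' - Real.log a')| ≤
      Real.log 2 / (θ * (1 - θ)) := by
  obtain ⟨hθ₀, hθ₁⟩ := hθ
  have ha' : 0 < a' := ha.trans_le haa'
  have hb' : 0 < b' := hb.trans_le hbb'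
  have hα : 0 ≤ Real.log a' - Real.log a := sub_nonneg.2 (log_le_log ha haa')
  have hβ : 0 ≤ Real.log b' - Real.log b := sub_nonneg.2 (log_le_log hb hbb')
  have hlog : (1 - θ) * (Real.log a' - Real.log a) + θ * (Real.log b' - Real.log b) =
      Real.log 2 := by
    have := congrArg Real.log h
    rw [log_mul (by positivity) (by positivity), log_mul two_ne_zero (by positivity),
      log_mul (by positivity) (by positivity), log_rpow ha', log_rpow hb', log_rpow ha,
      log_rpow hb] at this
    linarith
  have habs : |(Real.log b - Real.log a) - (Real.log b' - Real.log a')| ≤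
      (Real.log a' - Real.log a) + (Real.log b' - Real.log b) :=
    abs_le.2 ⟨by linarith, by linarith⟩
  have hθθ : 0 < θ * (1 - θ) := mul_pos hθ₀ (sub_pos.2 hθ₁)
  rw [le_div_iff₀ hθθ]
  calc _ ≤ ((Real.log a' - Real.log a) + (Real.log b' - Real.log b)) * (θ * (1 - θ)) := by
        gcongr
    _ ≤ Real.log 2 := by
        nlinarith [mul_nonneg (mul_nonneg (sub_nonneg.2 hθ₁.le) hα) (sub_nonneg.2 hθ₁.le),
          mul_nonneg (mul_nonneg hθ₀.le hβ) hθ₀.le]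

theorem norm_two_mul_sub_le {Ω : ℂ → ℂ} {a b : ℂ → ℝ} {θ : ℝ} (hθ : θ ∈ Ioo 0 1)
    (ha : ∀ x, 0 ≤ a x) (hb : ∀ x, 0 ≤ b x) (hab : ∀ x, a x ^ (1 - θ) * b x ^ θ = ‖x‖)
    (ha₂ : ∀ x, a x ≤ a (2 * x)) (hb₂ : ∀ x, b x ≤ b (2 * x))
    (hΩ : ∀ x, Ω x = x * ((Real.log (b x) - Real.log (a x) : ℝ) : ℂ)) (x : ℂ) :
    ‖2 * Ω x - Ω (2 * x)‖ ≤ 2 * (Real.log 2 / (θ * (1 - θ))) * ‖x‖ := by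
  rcases eq_or_ne x 0 with rfl | hx
  · simp [hΩ]
  obtain ⟨hax, hbx⟩ := pos_of_rpow_mul_rpow_pos (ha x) (hb x) hθ
    ((hab x).symm ▸ norm_pos_iff.2 hx)
  have hdiff : 2 * Ω x - Ω (2 * x) = 2 * x *
      (((Real.log (b x) - Real.log (a x)) - (Real.log (b (2 * x)) - Real.log (a (2 * x))) :
        ℝ) : ℂ) := by
    rw [hΩ, hΩ]; push_cast; ring
  have hlog := abs_log_sub_log_sub_le hθ hax (ha₂ x) hbx (hb₂ x)
    (by rw [hab, hab, norm_mul, Complex.norm_two])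
  rw [hdiff, norm_mul, norm_mul, Complex.norm_two, norm_real, Real.norm_eq_abs]
  calc 2 * ‖x‖ * |_| ≤ 2 * ‖x‖ * (Real.log 2 / (θ * (1 - θ))) := by gcongr
    _ = _ := by ring

theorem Delta2.exists_twisted_doubling {𝕜 : Type*} [RCLike 𝕜] {φ : ℝ → ℝ} {Ω : 𝕜 → 𝕜} {K : ℝ}
    (hΔ : Delta2 φ) (hmono : MonotoneOn φ (Ici 0)) (hnonneg : MapsTo φ (Ici 0) (Ici 0))
    (hK : 0 ≤ K) (hΩ : ∀ x, φ ‖2 * Ω x - Ω (2 * x)‖ ≤ K * φ ‖x‖) :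
    ∃ M, 0 < M ∧ ∀ x₁ x₀ : 𝕜,
      φ ‖2 * x₀‖ + φ ‖2 * x₁ - Ω (2 * x₀)‖ ≤ M * (φ ‖x₀‖ + φ ‖x₁ - Ω x₀‖) := by
  obtain ⟨C, hC, hφC⟩ := hΔ
  refine ⟨C * C + C + C * K, by positivity, fun x₁ x₀ => ?_⟩
  have hnorm_two : ∀ y : 𝕜, ‖2 * y‖ = 2 * ‖y‖ := fun y => by rw [norm_mul, RCLike.norm_two]
  have h₀ : φ ‖2 * x₀‖ ≤ C * φ ‖x₀‖ := hnorm_two x₀ ▸ hφC _ (norm_nonneg _)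
  have htri : ‖2 * x₁ - Ω (2 * x₀)‖ ≤ 2 * ‖x₁ - Ω x₀‖ + ‖2 * Ω x₀ - Ω (2 * x₀)‖ := by
    rw [← hnorm_two]
    exact (congrArg norm (by ring)).trans_le (norm_add_le _ _)
  have h₁ : φ ‖2 * x₁ - Ω (2 * x₀)‖ ≤ C * (C * φ ‖x₁ - Ω x₀‖ + K * φ ‖x₀‖) :=
    calc φ ‖2 * x₁ - Ω (2 * x₀)‖
        ≤ φ (2 * ‖x₁ - Ω x₀‖ + ‖2 * Ω x₀ - Ω (2 * x₀)‖) :=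
          hmono (norm_nonneg _) (mem_Ici.2 (by positivity)) htri
      _ ≤ C * (φ (2 * ‖x₁ - Ω x₀‖) + φ ‖2 * Ω x₀ - Ω (2 * x₀)‖) :=
          map_add_le_of_map_two_mul_le hC.le hmono hnonneg hφC (by positivity) (norm_nonneg _)
      _ ≤ C * (C * φ ‖x₁ - Ω x₀‖ + K * φ ‖x₀‖) := by
          gcongr
          exacts [hφC _ (norm_nonneg _), hΩ x₀]
  have hφx₀ : 0 ≤ φ ‖x₀‖ := hnonneg (norm_nonneg _)
  have hφx₁ : 0 ≤ φ ‖x₁ - Ω x₀‖ := hnonneg (norm_nonneg _)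
  nlinarith [mul_nonneg (mul_nonneg hC.le hC.le) hφx₀, mul_nonneg hC.le hφx₁,
    mul_nonneg (mul_nonneg hC.le hK) hφx₁]

theorem derivation_delta2_general
    (φ₀ φ₁ φ₀inv φ₁inv φθ : ℝ → ℝ) (θ : ℝ) (hθ : θ ∈ Set.Ioo (0:ℝ) 1)
    -- φ₀, φ₁ are nondegenerate Orlicz functions in Δ₂
    (hconv₀ : ConvexOn ℝ (Set.Ici 0) φ₀) (hzero₀ : φ₀ 0 = 0)
    (hnonneg₀ : ∀ t, 0 ≤ t → 0 ≤ φ₀ t)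
    (hΔ₂₀ : ∃ M > 0, ∀ t, 0 ≤ t → φ₀ (2 * t) ≤ M * φ₀ t)
    (hconv₁ : ConvexOn ℝ (Set.Ici 0) φ₁) (hzero₁ : φ₁ 0 = 0)
    (hnonneg₁ : ∀ t, 0 ≤ t → 0 ≤ φ₁ t)
    (hΔ₂₁ : ∃ M > 0, ∀ t, 0 ≤ t → φ₁ (2 * t) ≤ M * φ₁ t)
    -- φ₀inv, φ₁inv are the inverses of φ₀, φ₁ on [0,∞)
    (hinv_nonneg₀ : ∀ s, 0 ≤ s → 0 ≤ φ₀inv s)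
    (hleft₀ : ∀ t, 0 ≤ t → φ₀inv (φ₀ t) = t)
    (hright₀ : ∀ s, 0 ≤ s → φ₀ (φ₀inv s) = s)
    (hinv_nonneg₁ : ∀ s, 0 ≤ s → 0 ≤ φ₁inv s)
    (hleft₁ : ∀ t, 0 ≤ t → φ₁inv (φ₁ t) = t)
    (hright₁ : ∀ s, 0 ≤ s → φ₁ (φ₁inv s) = s)
    -- φθ is the Orlicz function with φθ⁻¹ = (φ₀⁻¹)^{1−θ} (φ₁⁻¹)^θ
    (hθnonneg : ∀ s, 0 ≤ s → 0 ≤ φθ s)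
    (hθleft : ∀ t, 0 ≤ t → φθ (φ₀inv t ^ (1 - θ) * φ₁inv t ^ θ) = t)
    (hθright : ∀ s, 0 ≤ s → φ₀inv (φθ s) ^ (1 - θ) * φ₁inv (φθ s) ^ θ = s)
    :
    let g : ℂ → ℂ → ℂ := fun x z =>
      ((φ₀inv (φθ (‖x‖)) : ℂ) ^ ((1 : ℂ) - z)) *
        ((φ₁inv (φθ (‖x‖)) : ℂ) ^ z) * csgn x
    let Ω : ℂ → ℂ := fun x => deriv (g x) θ
    let Ψ : ℂ × ℂ → ℝ := fun p =>
      φθ (‖p.2‖) + φθ (‖p.1 - Ω p.2‖)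
    (∃ K : ℝ, 0 < K ∧ ∀ x : ℂ,
      φθ (‖2 * Ω x - Ω (2 * x)‖) ≤ K * φθ (‖x‖)) ∧
    (∃ M : ℝ, 0 < M ∧ ∀ x₁ x₀ : ℂ, Ψ (2 * x₁, 2 * x₀) ≤ M * Ψ (x₁, x₀)) := by
  intro g Ω Ψ
  have h₀ : IsMonoInvOn φ₀ φ₀inv :=
    .of_convexOn hconv₀ hzero₀ hnonneg₀ hinv_nonneg₀ ⟨hleft₀, hright₀⟩
  have h₁ : IsMonoInvOn φ₁ φ₁inv :=
    .of_convexOn hconv₁ hzero₁ hnonneg₁ hinv_nonneg₁ ⟨hleft₁, hright₁⟩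
  have hθI : IsMonoInvOn φθ (geomInterp φ₀inv φ₁inv θ) :=
    h₀.of_inv_geomInterp h₁ (Ioo_subset_Icc_self hθ) hθnonneg ⟨hθleft, hθright⟩
  have hΔ : Delta2 φθ := .of_inv_geomInterp h₀ h₁ hΔ₂₀ hΔ₂₁ (Ioo_subset_Icc_self hθ) hθI
  have hφθ : ∀ x : ℂ, 0 ≤ φθ ‖x‖ := fun x => hθnonneg _ (norm_nonneg x)
  have hφθ_two_mul : ∀ x : ℂ, φθ ‖x‖ ≤ φθ ‖2 * x‖ := fun x =>
    hθI.monotoneOn (norm_nonneg _) (norm_nonneg _)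
      (by rw [norm_mul, Complex.norm_two]; linarith [norm_nonneg x])
  have hbound := norm_two_mul_sub_le (Ω := Ω) hθ
    (fun x => hinv_nonneg₀ _ (hφθ x)) (fun x => hinv_nonneg₁ _ (hφθ x))
    (fun x => hθright _ (norm_nonneg x))
    (fun x => h₀.monotoneOn_inv (hφθ x) (hφθ _) (hφθ_two_mul x))
    (fun x => h₁.monotoneOn_inv (hφθ x) (hφθ _) (hφθ_two_mul x))
    (fun x => deriv_cpow_one_sub_mul_cpow_mul_csgn (hinv_nonneg₀ _ (hφθ x))
      (hinv_nonneg₁ _ (hφθ x)) hθ (hθright _ (norm_nonneg x)))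
  obtain ⟨K, hK, hφK⟩ := hΔ.exists_map_le_mul_map hθI.monotoneOn _
  have hderiv : ∀ x : ℂ, φθ ‖2 * Ω x - Ω (2 * x)‖ ≤ K * φθ ‖x‖ := fun x =>
    hφK _ _ (norm_nonneg _) (norm_nonneg _) (hbound x)
  exact ⟨⟨K, hK, hderiv⟩, hΔ.exists_twisted_doubling hθI.monotoneOn hθnonneg hK.le hderiv⟩

/-- the estimate `φ_θ(|2g_x'(θ) − g_{2x}'(θ)|) ≤ K φ_θ(|x|)`, and the
Δ₂ condition for the quasi-Young function
`ψ(x₁,x₀) = φ_θ(x₀) + φ_θ(x₁ − g_{x₀}'(θ))` on `ℂ²`. -/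
theorem derivation_delta2
    (φ₀ φ₁ φ₀inv φ₁inv φθ : ℝ → ℝ) (θ : ℝ) (hθ : θ ∈ Set.Ioo (0:ℝ) 1)
    -- φ₀, φ₁ are nondegenerate Orlicz functions in Δ₂
    (hconv₀ : ConvexOn ℝ (Set.Ici 0) φ₀) (hzero₀ : φ₀ 0 = 0)
    (hnonneg₀ : ∀ t, 0 ≤ t → 0 ≤ φ₀ t)
    (htop₀ : Filter.Tendsto φ₀ Filter.atTop Filter.atTop)
    (hnondeg₀ : ∀ t, 0 < t → 0 < φ₀ t)
    (hΔ₂₀ : ∃ M > 0, ∀ t, 0 ≤ t → φ₀ (2 * t) ≤ M * φ₀ t)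
    (hconv₁ : ConvexOn ℝ (Set.Ici 0) φ₁) (hzero₁ : φ₁ 0 = 0)
    (hnonneg₁ : ∀ t, 0 ≤ t → 0 ≤ φ₁ t)
    (htop₁ : Filter.Tendsto φ₁ Filter.atTop Filter.atTop)
    (hnondeg₁ : ∀ t, 0 < t → 0 < φ₁ t)
    (hΔ₂₁ : ∃ M > 0, ∀ t, 0 ≤ t → φ₁ (2 * t) ≤ M * φ₁ t)
    -- φ₀inv, φ₁inv are the inverses of φ₀, φ₁ on [0,∞)
    (hinv_nonneg₀ : ∀ s, 0 ≤ s → 0 ≤ φ₀inv s)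
    (hleft₀ : ∀ t, 0 ≤ t → φ₀inv (φ₀ t) = t)
    (hright₀ : ∀ s, 0 ≤ s → φ₀ (φ₀inv s) = s)
    (hinv_nonneg₁ : ∀ s, 0 ≤ s → 0 ≤ φ₁inv s)
    (hleft₁ : ∀ t, 0 ≤ t → φ₁inv (φ₁ t) = t)
    (hright₁ : ∀ s, 0 ≤ s → φ₁ (φ₁inv s) = s)
    -- φθ is the Orlicz function with φθ⁻¹ = (φ₀⁻¹)^{1−θ} (φ₁⁻¹)^θ
    (hθnonneg : ∀ s, 0 ≤ s → 0 ≤ φθ s)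
    (hθleft : ∀ t, 0 ≤ t → φθ (φ₀inv t ^ (1 - θ) * φ₁inv t ^ θ) = t)
    (hθright : ∀ s, 0 ≤ s → φ₀inv (φθ s) ^ (1 - θ) * φ₁inv (φθ s) ^ θ = s)
    :
    let g : ℂ → ℂ → ℂ := fun x z =>
      ((φ₀inv (φθ (‖x‖)) : ℂ) ^ ((1 : ℂ) - z)) *
        ((φ₁inv (φθ (‖x‖)) : ℂ) ^ z) * csgn x
    let Ω : ℂ → ℂ := fun x => deriv (g x) θ
    let Ψ : ℂ × ℂ → ℝ := fun p =>
      φθ (‖p.2‖) + φθ (‖p.1 - Ω p.2‖)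
    (∃ K : ℝ, 0 < K ∧ ∀ x : ℂ,
      φθ (‖2 * Ω x - Ω (2 * x)‖) ≤ K * φθ (‖x‖)) ∧
    (∃ M : ℝ, 0 < M ∧ ∀ x₁ x₀ : ℂ, Ψ (2 * x₁, 2 * x₀) ≤ M * Ψ (x₁, x₀)) :=
  derivation_delta2_general φ₀ φ₁ φ₀inv φ₁inv φθ θ hθ hconv₀ hzero₀ hnonneg₀ hΔ₂₀ hconv₁ hzero₁
    hnonneg₁ hΔ₂₁ hinv_nonneg₀ hleft₀ hright₀ hinv_nonneg₁ hleft₁ hright₁ hθnonneg hθleft hθright
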